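/- arXiv:1401.2741 — 13 statements merged into one kernel-verified Lean document; each statement's English description precedes it below -/
import Mathlib

section
/- Let G be a group and let L, R be nonempty subsets of G. The adjacency relation of the two-sided Cayley graph 2SCay(G;L,R) is symmetric — that is, for all x, y ∈ G, (∃ ℓ ∈ L, r ∈ R with y = ℓ⁻¹·x·r) if and only if (∃ ℓ ∈ L, r ∈ R with x = ℓ⁻¹·y·r) — if and only if L⁻¹·g·R = L·g·R⁻¹ for every g ∈ G. -/
open Pointwise

/-- Arc relation of the two-sided Cayley graph 2SCay(G;L,R):
there is an arc from `x` to `y` iff `y = l⁻¹ * x * r` for some `l ∈ L`, `r ∈ R`. -/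
def twoSidedArc {G : Type*} [Group G] (L R : Set G) (x y : G) : Prop :=
  ∃ l ∈ L, ∃ r ∈ R, y = l⁻¹ * x * r

/-- Conjugate of a set: `S^g = {g⁻¹ * s * g : s ∈ S}`. -/
def conjSet {G : Type*} [Group G] (g : G) (S : Set G) : Set G :=
  (fun s => g⁻¹ * s * g) '' S

/-- The 2S-Cayley property of a pair of subsets of a group. -/
def TwoSCayley {G : Type*} [Group G] (L R : Set G) : Prop :=
  L.Nonempty ∧ R.Nonempty ∧
  (∀ g : G, L⁻¹ * {g} * R = L * {g} * R⁻¹) ∧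
  (∀ g : G, conjSet g L ∩ R = ∅) ∧
  (∀ g : G, conjSet g (L * L⁻¹) ∩ (R * R⁻¹) = {1})

/-- Normalizer of a subset `S` of `G`: the set of `g` with `g·S = S·g`. -/
def setNorm {G : Type*} [Group G] (S : Set G) : Set G :=
  {g : G | {g} * S = S * {g}}


lemma mem_LinvgR {G : Type*} [Group G] (L R : Set G) (g y : G) :
    y ∈ L⁻¹ * {g} * R ↔ twoSidedArc L R g y := by
  constructor
  · rintro ⟨_, ⟨li, hli, g', hg', rfl⟩, r, hr, rfl⟩
    rw [Set.mem_singleton_iff] at hg'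
    subst hg'
    exact ⟨li⁻¹, (Set.mem_inv).mp hli, r, hr, by group⟩
  · rintro ⟨l, hl, r, hr, rfl⟩
    exact ⟨l⁻¹ * g, ⟨l⁻¹, Set.inv_mem_inv.mpr hl, g, rfl, rfl⟩, r, hr, rfl⟩

lemma mem_LgRinv {G : Type*} [Group G] (L R : Set G) (g y : G) :
    y ∈ L * {g} * R⁻¹ ↔ twoSidedArc L R y g := by
  constructor
  · rintro ⟨_, ⟨l, hl, g', hg', rfl⟩, ri, hri, rfl⟩
    rw [Set.mem_singleton_iff] at hg'
    subst hg'
    exact ⟨l, hl, ri⁻¹, (Set.mem_inv).mp hri, by group⟩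
  · rintro ⟨l, hl, r, hr, h⟩
    refine ⟨l * g, ⟨l, hl, g, rfl, rfl⟩, r⁻¹, Set.inv_mem_inv.mpr hr, ?_⟩
    rw [h]; group

theorem two_sided_cayley_symmetric_iff {G : Type*} [Group G] (L R : Set G)
    (hL : L.Nonempty) (hR : R.Nonempty) :
    (∀ x y : G, twoSidedArc L R x y ↔ twoSidedArc L R y x) ↔
      (∀ g : G, L⁻¹ * {g} * R = L * {g} * R⁻¹) := by
  constructor
  · intro h g
    ext y
    rw [mem_LinvgR, mem_LgRinv]
    exact h g y
  · intro h x y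
    rw [← mem_LinvgR, ← mem_LgRinv, h x]
end

section
/- Let G be a group with identity e and let L, R be nonempty subsets of G. Then (g⁻¹·(L·L⁻¹)·g) ∩ (R·R⁻¹) = {e} for every g ∈ G if and only if the two-sided Cayley graph 2SCay(G;L,R) has no multiple arcs, that is, if and only if for every x ∈ G the map L × R → G, (ℓ, r) ↦ ℓ⁻¹·x·r, is injective. -/
open Pointwise

theorem two_sided_cayley_no_multiple_arcs_iff {G : Type*} [Group G] (L R : Set G)
    (hL : L.Nonempty) (hR : R.Nonempty) :
    (∀ g : G, conjSet g (L * L⁻¹) ∩ (R * R⁻¹) = {1}) ↔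
      (∀ x : G, Set.InjOn (fun p : G × G => p.1⁻¹ * x * p.2) (L ×ˢ R)) := by
  constructor
  · intro h x p hp q hq heq
    obtain ⟨hp1, hp2⟩ := hp
    obtain ⟨hq1, hq2⟩ := hq
    simp only at heq
    -- q.1 * p.1⁻¹ conjugated by x equals q.2 * p.2⁻¹
    have key : x⁻¹ * (q.1 * p.1⁻¹) * x ∈ conjSet x (L * L⁻¹) ∩ (R * R⁻¹) := by
      constructor
      · exact Set.mem_image_of_mem _ (Set.mul_mem_mul hq1 (Set.inv_mem_inv.mpr hp1))
      · have : x⁻¹ * (q.1 * p.1⁻¹) * x = q.2 * p.2⁻¹ := by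
          calc x⁻¹ * (q.1 * p.1⁻¹) * x
              = x⁻¹ * q.1 * ((p.1⁻¹ * x * p.2) * p.2⁻¹) := by group
            _ = x⁻¹ * q.1 * ((q.1⁻¹ * x * q.2) * p.2⁻¹) := by rw [heq]
            _ = q.2 * p.2⁻¹ := by group
        rw [this]
        exact Set.mul_mem_mul hq2 (Set.inv_mem_inv.mpr hp2)
    rw [h x] at key
    have h1 : q.1 * p.1⁻¹ = 1 := by
      calc q.1 * p.1⁻¹ = x * (x⁻¹ * (q.1 * p.1⁻¹) * x) * x⁻¹ := by group
        _ = x * 1 * x⁻¹ := by rw [key]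
        _ = 1 := by group
    have hp1q1 : p.1 = q.1 := by
      have := mul_inv_eq_one.mp h1
      exact this.symm
    have h2 : p.2 = q.2 := by
      have : p.1⁻¹ * x * p.2 = p.1⁻¹ * x * q.2 := by rw [heq, hp1q1]
      exact mul_left_cancel this
    exact Prod.ext hp1q1 h2
  · intro h g
    ext y
    simp only [Set.mem_inter_iff, Set.mem_singleton_iff]
    constructor
    · rintro ⟨⟨s, hs, rfl⟩, hr⟩
      obtain ⟨l1, hl1, l2i, hl2i, rfl⟩ := hs
      obtain ⟨r1, hr1, r2i, hr2i, hrr⟩ := hr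
      have hl2 : l2i⁻¹ ∈ L := Set.mem_inv.mp hl2i
      have hr2 : r2i⁻¹ ∈ R := Set.mem_inv.mp hr2i
      set l2 := l2i⁻¹ with hl2def
      set r2 := r2i⁻¹ with hr2def
      have el2 : l2i = l2⁻¹ := (inv_inv l2i).symm
      have er2 : r2i = r2⁻¹ := (inv_inv r2i).symm
      rw [el2] at hrr ⊢
      rw [er2] at hrr
      -- g⁻¹ * (l1 * l2⁻¹) * g = r1 * r2⁻¹  ⇒  l2⁻¹ * g * r2 = l1⁻¹ * g * r1
      have heq : (fun p : G × G => p.1⁻¹ * g * p.2) (l2, r2) =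
          (fun p : G × G => p.1⁻¹ * g * p.2) (l1, r1) := by
        simp only
        have hrr' : r1 * r2⁻¹ = g⁻¹ * (l1 * l2⁻¹) * g := hrr
        have : l1 * l2⁻¹ * g = g * (r1 * r2⁻¹) := by rw [hrr']; group
        calc l2⁻¹ * g * r2 = l1⁻¹ * (l1 * l2⁻¹ * g) * r2 := by group
          _ = l1⁻¹ * (g * (r1 * r2⁻¹)) * r2 := by rw [this]
          _ = l1⁻¹ * g * r1 := by group
      have := h g ⟨hl2, hr2⟩ ⟨hl1, hr1⟩ heq
      have e1 : l2 = l1 := congrArg Prod.fst this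
      have e2 : r2 = r1 := congrArg Prod.snd this
      show g⁻¹ * (l1 * l2⁻¹) * g = 1
      rw [e1]; group
    · rintro rfl
      obtain ⟨l, hl⟩ := hL
      obtain ⟨r, hr⟩ := hR
      have h1L : (1 : G) ∈ L * L⁻¹ := by
        rw [← mul_inv_cancel l]; exact Set.mul_mem_mul hl (Set.inv_mem_inv.mpr hl)
      have h1R : (1 : G) ∈ R * R⁻¹ := by
        rw [← mul_inv_cancel r]; exact Set.mul_mem_mul hr (Set.inv_mem_inv.mpr hr)
      exact ⟨⟨1, h1L, by group⟩, h1R⟩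
end

section
/- Let G be a group and let L, R be finite nonempty subsets of G such that (L,R) has the 2S-Cayley property. Then the two-sided Cayley graph 2SCay(G;L,R) is regular of valency |L|·|R|: for every x ∈ G, the set of neighbours {ℓ⁻¹·x·r : ℓ ∈ L, r ∈ R} = L⁻¹·x·R has exactly |L|·|R| elements. -/
open Pointwise

theorem two_sided_cayley_valency {G : Type*} [Group G] (L R : Set G)
    (hLf : L.Finite) (hRf : R.Finite) (h : TwoSCayley L R) (x : G) :
    (L⁻¹ * {x} * R).ncard = L.ncard * R.ncard := by
  obtain ⟨-, -, -, -, h3⟩ := h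
  have hset : L⁻¹ * {x} * R = (fun p : G × G => p.1⁻¹ * x * p.2) '' (L ×ˢ R) := by
    ext y
    simp only [Set.mem_mul, Set.mem_inv, Set.mem_singleton_iff, Set.mem_image, Set.mem_prod,
      Prod.exists]
    constructor
    · rintro ⟨a, ⟨li, hli, b, rfl, rfl⟩, r, hr, rfl⟩
      exact ⟨li⁻¹, r, ⟨hli, hr⟩, by simp⟩
    · rintro ⟨l, r, ⟨hl, hr⟩, rfl⟩
      exact ⟨l⁻¹ * x, ⟨l⁻¹, by simp [hl], x, rfl, rfl⟩, r, hr, rfl⟩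
  have hinj : Set.InjOn (fun p : G × G => p.1⁻¹ * x * p.2) (L ×ˢ R) := by
    rintro ⟨l₁, r₁⟩ ⟨hl₁, hr₁⟩ ⟨l₂, r₂⟩ ⟨hl₂, hr₂⟩ heq
    simp only at heq hl₁ hr₁ hl₂ hr₂
    have key : x⁻¹ * (l₂ * l₁⁻¹) * x = r₂ * r₁⁻¹ := by
      calc x⁻¹ * (l₂ * l₁⁻¹) * x = x⁻¹ * l₂ * (l₁⁻¹ * x * r₁) * r₁⁻¹ := by group
        _ = x⁻¹ * l₂ * (l₂⁻¹ * x * r₂) * r₁⁻¹ := by rw [heq]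
        _ = r₂ * r₁⁻¹ := by group
    have hmem : r₂ * r₁⁻¹ ∈ conjSet x (L * L⁻¹) ∩ (R * R⁻¹) :=
      ⟨⟨l₂ * l₁⁻¹, ⟨l₂, hl₂, l₁⁻¹, Set.inv_mem_inv.2 hl₁, rfl⟩, key⟩,
       ⟨r₂, hr₂, r₁⁻¹, Set.inv_mem_inv.2 hr₁, rfl⟩⟩
    rw [h3 x, Set.mem_singleton_iff] at hmem
    have hr : r₁ = r₂ := (mul_inv_eq_one.1 hmem).symm
    subst hr
    have hl : l₁ = l₂ := by
      have := mul_right_cancel heq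
      exact inv_injective (mul_right_cancel this)
    simp [hl]
  rw [hset, Set.ncard_image_of_injOn hinj, ← Nat.card_coe_set_eq (L ×ˢ R),
    ← Nat.card_coe_set_eq L, ← Nat.card_coe_set_eq R, Nat.card_congr (Equiv.Set.prod L R), Nat.card_prod]
end

section
/- Let G be a group and let L, R be nonempty inverse-closed subsets of G (L = L⁻¹ and R = R⁻¹) such that (L,R) has the 2S-Cayley property, and let Γ = 2SCay(G;L,R). Then Γ is connected (every two elements of G are joined by a path in Γ) if and only if both of the following hold: (a) G = ⟨L⟩·⟨R⟩, i.e. every g ∈ G can be written g = x·y with x in the subgroup generated by L and y in the subgroup generated by R; and (b) there exist a finite list ℓ₁,…,ℓ_j of elements of L and a finite list r₁,…,r_k of elements of R such that j and k have opposite parity and ℓ₁⋯ℓ_j·r₁⋯r_k = e. -/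
open Pointwise

section Aux

variable {G : Type*} [Group G] {L R : Set G}

private lemma mem_of_inv_mem (hLi : L⁻¹ = L) {a : G} (ha : a⁻¹ ∈ L) : a ∈ L := by
  rw [← hLi]; simpa [Set.mem_inv] using ha

private lemma invRev_mem (hLi : L⁻¹ = L) {w : List G} (hw : ∀ a ∈ w, a ∈ L) :
    ∀ a ∈ (w.map fun x => x⁻¹).reverse, a ∈ L := by
  intro a ha
  simp only [List.mem_reverse, List.mem_map] at ha
  obtain ⟨b, hb, rfl⟩ := ha
  exact mem_of_inv_mem hLi (by simpa using hw b hb)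

/-- Every `EqvGen` relation gives a two-sided word representation with equal lengths. -/
private lemma eqvGen_rep (hLi : L⁻¹ = L) (hRi : R⁻¹ = R) {x y : G}
    (h : Relation.EqvGen (twoSidedArc L R) x y) :
    ∃ w w' : List G, (∀ a ∈ w, a ∈ L) ∧ (∀ a ∈ w', a ∈ R) ∧
      w.length = w'.length ∧ y = w.prod⁻¹ * x * w'.prod := by
  induction h with
  | rel x y hxy =>
      obtain ⟨l, hl, r, hr, rfl⟩ := hxy
      exact ⟨[l], [r], by simpa using hl, by simpa using hr, rfl, by simp⟩
  | refl x => exact ⟨[], [], by simp, by simp, rfl, by simp⟩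
  | symm x y _ ih =>
      obtain ⟨w, w', hw, hw', hlen, rfl⟩ := ih
      refine ⟨(w.map fun x => x⁻¹).reverse, (w'.map fun x => x⁻¹).reverse,
        invRev_mem hLi hw, invRev_mem hRi hw', by simp [hlen], ?_⟩
      rw [← List.prod_inv_reverse, ← List.prod_inv_reverse]
      group
  | trans x y z _ _ ih1 ih2 =>
      obtain ⟨w, w', hw, hw', hlen, rfl⟩ := ih1
      obtain ⟨v, v', hv, hv', hlen2, rfl⟩ := ih2
      refine ⟨w ++ v, w' ++ v', ?_, ?_, by simp [hlen, hlen2], ?_⟩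
      · intro a ha; rcases List.mem_append.mp ha with h | h
        exacts [hw a h, hv a h]
      · intro a ha; rcases List.mem_append.mp ha with h | h
        exacts [hw' a h, hv' a h]
      · simp only [List.prod_append, mul_inv_rev]
        group

/-- A two-sided word representation with equal lengths gives an `EqvGen` relation. -/
private lemma rep_eqvGen : ∀ (w w' : List G), (∀ a ∈ w, a ∈ L) → (∀ a ∈ w', a ∈ R) →
    w.length = w'.length → ∀ x : G,
    Relation.EqvGen (twoSidedArc L R) x (w.prod⁻¹ * x * w'.prod)
  | [], [], _, _, _, x => by simpa using Relation.EqvGen.refl x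
  | l :: t, r :: t', hw, hw', hlen, x => by
      have h1 : twoSidedArc L R x (l⁻¹ * x * r) :=
        ⟨l, hw l (by simp), r, hw' r (by simp), rfl⟩
      have h2 := rep_eqvGen t t' (fun a ha => hw a (List.mem_cons_of_mem _ ha))
        (fun a ha => hw' a (List.mem_cons_of_mem _ ha)) (by simpa using hlen) (l⁻¹ * x * r)
      have h3 := (Relation.EqvGen.rel _ _ h1).trans _ _ _ h2
      have heq : (l :: t).prod⁻¹ * x * (r :: t').prod
          = t.prod⁻¹ * (l⁻¹ * x * r) * t'.prod := by
        simp only [List.prod_cons, mul_inv_rev]; group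
      rwa [heq]
  | [], _ :: _, _, _, hlen, _ => by simp at hlen
  | _ :: _, [], _, _, hlen, _ => by simp at hlen

private lemma pad (hLi : L⁻¹ = L) {l₀ : G} (hl₀ : l₀ ∈ L) :
    ∀ (k : ℕ) (w : List G), (∀ a ∈ w, a ∈ L) →
    ∃ v : List G, (∀ a ∈ v, a ∈ L) ∧ v.length = w.length + 2 * k ∧ v.prod = w.prod
  | 0, w, hw => ⟨w, hw, by simp, rfl⟩
  | k + 1, w, hw => by
      obtain ⟨v, hv, hlen, hprod⟩ := pad hLi hl₀ k w hw
      refine ⟨l₀ :: l₀⁻¹ :: v, ?_, ?_, ?_⟩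
      · intro a ha
        rcases List.mem_cons.mp ha with rfl | ha
        · exact hl₀
        rcases List.mem_cons.mp ha with rfl | ha
        · exact mem_of_inv_mem hLi (by simpa using hl₀)
        · exact hv a ha
      · simp only [List.length_cons, hlen]; omega
      · simp [List.prod_cons, hprod, mul_inv_cancel_left]

/-- A two-sided word representation with lengths of equal parity yields connectivity. -/
private lemma parity_rep_eqvGen (hLi : L⁻¹ = L) (hRi : R⁻¹ = R)
    (hL0 : L.Nonempty) (hR0 : R.Nonempty)
    {x y : G} (w w' : List G) (hw : ∀ a ∈ w, a ∈ L) (hw' : ∀ a ∈ w', a ∈ R)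
    (hpar : w.length % 2 = w'.length % 2) (hy : y = w.prod⁻¹ * x * w'.prod) :
    Relation.EqvGen (twoSidedArc L R) x y := by
  obtain ⟨l₀, hl₀⟩ := hL0
  obtain ⟨r₀, hr₀⟩ := hR0
  subst hy
  rcases le_total w.length w'.length with hle | hle
  · obtain ⟨k, hk⟩ : ∃ k, w'.length = w.length + 2 * k :=
      ⟨(w'.length - w.length) / 2, by omega⟩
    obtain ⟨v, hv, hlen, hprod⟩ := pad hLi hl₀ k w hw
    have := rep_eqvGen v w' hv hw' (by omega) x
    rwa [hprod] at this
  · obtain ⟨k, hk⟩ : ∃ k, w.length = w'.length + 2 * k :=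
      ⟨(w.length - w'.length) / 2, by omega⟩
    obtain ⟨v, hv, hlen, hprod⟩ := pad hRi hr₀ k w' hw'
    have := rep_eqvGen w v hw hv (by omega) x
    rwa [hprod] at this

private lemma closure_rep (hLi : L⁻¹ = L) {g : G} (hg : g ∈ Subgroup.closure L) :
    ∃ u : List G, (∀ a ∈ u, a ∈ L) ∧ u.prod = g := by
  have : g ∈ Submonoid.closure (L ∪ L⁻¹) := by
    rw [← Subgroup.closure_toSubmonoid]
    exact hg
  rw [hLi, Set.union_self] at this
  exact Submonoid.exists_list_of_mem_closure this

end Aux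

theorem two_sided_cayley_connected_iff {G : Type*} [Group G] (L R : Set G)
    (hLi : L⁻¹ = L) (hRi : R⁻¹ = R) (h : TwoSCayley L R) :
    (∀ x y : G, Relation.EqvGen (twoSidedArc L R) x y) ↔
      ((∀ g : G, ∃ x ∈ Subgroup.closure L, ∃ y ∈ Subgroup.closure R, g = x * y) ∧
        ∃ w w' : List G, (∀ a ∈ w, a ∈ L) ∧ (∀ a ∈ w', a ∈ R) ∧
          (w.length + w'.length) % 2 = 1 ∧ w.prod * w'.prod = 1) := by
  obtain ⟨hL0, hR0, -, -, -⟩ := h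
  constructor
  · intro hconn
    constructor
    · intro g
      obtain ⟨w, w', hw, hw', hlen, hg⟩ := eqvGen_rep hLi hRi (hconn 1 g)
      refine ⟨w.prod⁻¹, ?_, w'.prod, ?_, by simpa using hg⟩
      · exact inv_mem (Subgroup.list_prod_mem _ fun a ha => Subgroup.subset_closure (hw a ha))
      · exact Subgroup.list_prod_mem _ fun a ha => Subgroup.subset_closure (hw' a ha)
    · obtain ⟨l₀, hl₀⟩ := hL0
      obtain ⟨w, w', hw, hw', hlen, hg⟩ := eqvGen_rep hLi hRi (hconn 1 l₀)
      refine ⟨w ++ [l₀], (w'.map fun x => x⁻¹).reverse, ?_, invRev_mem hRi hw', ?_, ?_⟩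
      · intro a ha
        rcases List.mem_append.mp ha with ha | ha
        · exact hw a ha
        · rcases List.mem_singleton.mp ha with rfl; exact hl₀
      · simp only [List.length_append, List.length_singleton, List.length_reverse,
          List.length_map]
        omega
      · rw [List.prod_append, ← List.prod_inv_reverse, hg]
        simp

  · rintro ⟨ha, w₀, w₀', hw₀, hw₀', hpar₀, hprod₀⟩ x y
    -- word representations of x and y
    obtain ⟨px, hpx, qx, hqx, hx⟩ := ha x
    obtain ⟨py, hpy, qy, hqy, hy⟩ := ha y
    obtain ⟨a, haL, haP⟩ := closure_rep hLi hpx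
    obtain ⟨b, hbR, hbP⟩ := closure_rep hRi hqx
    obtain ⟨c, hcL, hcP⟩ := closure_rep hLi hpy
    obtain ⟨d, hdR, hdP⟩ := closure_rep hRi hqy
    have hxab : x = a.prod * b.prod := by rw [haP, hbP]; exact hx
    have hycd : y = c.prod * d.prod := by rw [hcP, hdP]; exact hy
    clear hx hy haP hbP hcP hdP hpx hqx hpy hqy
    -- main construction, assuming the parities of the two representations agree
    have key : ∀ a b : List G, (∀ u ∈ a, u ∈ L) → (∀ u ∈ b, u ∈ R) →
        x = a.prod * b.prod →
        (a.length + b.length) % 2 = (c.length + d.length) % 2 →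
        Relation.EqvGen (twoSidedArc L R) x y := by
      intro a b haL hbR hxab hpar
      refine parity_rep_eqvGen hLi hRi hL0 hR0
        (a ++ (c.map fun x => x⁻¹).reverse) ((b.map fun x => x⁻¹).reverse ++ d)
        ?_ ?_ ?_ ?_
      · intro u hu
        rcases List.mem_append.mp hu with hu | hu
        exacts [haL u hu, invRev_mem hLi hcL u hu]
      · intro u hu
        rcases List.mem_append.mp hu with hu | hu
        exacts [invRev_mem hRi hbR u hu, hdR u hu]
      · simp only [List.length_append, List.length_reverse, List.length_map]
        omega
      · rw [List.prod_append, List.prod_append, ← List.prod_inv_reverse,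
          ← List.prod_inv_reverse, hxab, hycd]
        group
    by_cases hp : (a.length + b.length) % 2 = (c.length + d.length) % 2
    · exact key a b haL hbR hxab hp
    · refine key (a ++ w₀) (w₀' ++ b) ?_ ?_ ?_ ?_
      · intro u hu
        rcases List.mem_append.mp hu with hu | hu
        exacts [haL u hu, hw₀ u hu]
      · intro u hu
        rcases List.mem_append.mp hu with hu | hu
        exacts [hw₀' u hu, hbR u hu]
      · rw [List.prod_append, List.prod_append, hxab]
        rw [show a.prod * w₀.prod * (w₀'.prod * b.prod)
            = a.prod * (w₀.prod * w₀'.prod) * b.prod from by group, hprod₀]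
        group
      · simp only [List.length_append]
        omega
end

section
/- Let G be a group and let L, R be nonempty inverse-closed subsets of G (L = L⁻¹ and R = R⁻¹) such that (L,R) has the 2S-Cayley property, and let Γ = 2SCay(G;L,R). Suppose that G = ⟨L⟩·⟨R⟩ (every g ∈ G equals x·y with x ∈ ⟨L⟩, y ∈ ⟨R⟩), but that there do NOT exist a list ℓ₁,…,ℓ_j of elements of L and a list r₁,…,r_k of elements of R with j, k of opposite parity and ℓ₁⋯ℓ_j·r₁⋯r_k = e. Then Γ is disconnected and has exactly two connected components, i.e. the relation 'joined by a path in Γ' is an equivalence relation on G with exactly two equivalence classes. -/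
open Pointwise

/-- Inverse of a word stays a word of the same length. -/
private lemma word_inv {G : Type*} [Group G] {S : Set G} (hSi : S⁻¹ = S)
    (w : List G) (hw : ∀ a ∈ w, a ∈ S) :
    ∃ v : List G, (∀ a ∈ v, a ∈ S) ∧ v.prod = w.prod⁻¹ ∧ v.length = w.length := by
  refine ⟨(w.map (fun x => x⁻¹)).reverse, ?_, (List.prod_inv_reverse w).symm, by simp⟩
  intro a ha
  simp only [List.mem_reverse, List.mem_map] at ha
  obtain ⟨b, hb, rfl⟩ := ha
  rw [← hSi]
  simpa using hw b hb

/-- Padding a word by 2k without changing its product. -/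
private lemma word_pad {G : Type*} [Group G] {S : Set G} (hSi : S⁻¹ = S)
    {s0 : G} (hs0 : s0 ∈ S) (k : ℕ) (w : List G) (hw : ∀ a ∈ w, a ∈ S) :
    ∃ v : List G, (∀ a ∈ v, a ∈ S) ∧ v.prod = w.prod ∧ v.length = w.length + 2 * k := by
  induction k with
  | zero => exact ⟨w, hw, rfl, by ring⟩
  | succ n ih =>
    obtain ⟨v, hv, hvp, hvl⟩ := ih
    have hs0' : s0⁻¹ ∈ S := by rw [← hSi]; simpa using hs0
    refine ⟨s0 :: s0⁻¹ :: v, ?_, by simp [hvp, mul_assoc], by simp [hvl]; ring⟩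
    intro a ha
    simp only [List.mem_cons] at ha
    rcases ha with rfl | rfl | ha
    · exact hs0
    · exact hs0'
    · exact hv a ha

/-- Every element of the closure of an inverse-closed set is a product of a word. -/
private lemma word_of_closure {G : Type*} [Group G] {S : Set G} (hSi : S⁻¹ = S)
    {g : G} (hg : g ∈ Subgroup.closure S) :
    ∃ w : List G, (∀ a ∈ w, a ∈ S) ∧ w.prod = g := by
  induction hg using Subgroup.closure_induction with
  | mem x hx => exact ⟨[x], by simpa using hx, by simp⟩
  | one => exact ⟨[], by simp, by simp⟩
  | mul x y _ _ hx hy =>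
    obtain ⟨w1, h1, p1⟩ := hx
    obtain ⟨w2, h2, p2⟩ := hy
    refine ⟨w1 ++ w2, ?_, by simp [p1, p2]⟩
    intro a ha
    rcases List.mem_append.mp ha with hh | hh
    exacts [h1 a hh, h2 a hh]
  | inv x _ hx =>
    obtain ⟨w, hw, pw⟩ := hx
    obtain ⟨v, hv, pv, _⟩ := word_inv hSi w hw
    exact ⟨v, hv, by rw [pv, pw]⟩

/-- Walking along matching words in L and R gives paths in the graph. -/
private lemma eqvGen_of_words {G : Type*} [Group G] (L R : Set G) :
    ∀ (w w' : List G), w.length = w'.length → (∀ a ∈ w, a ∈ L) → (∀ a ∈ w', a ∈ R) →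
      ∀ x : G, Relation.EqvGen (twoSidedArc L R) x (w.prod⁻¹ * x * w'.prod) := by
  intro w
  induction w with
  | nil =>
    intro w' hl _ _ x
    have : w' = [] := List.length_eq_zero_iff.mp hl.symm
    subst this
    simpa using Relation.EqvGen.refl x
  | cons l ws ih =>
    intro w' hl hw hw' x
    match w' with
    | [] => simp at hl
    | r :: ws' =>
      have step : Relation.EqvGen (twoSidedArc L R) x (l⁻¹ * x * r) :=
        Relation.EqvGen.rel _ _ ⟨l, hw l (by simp), r, hw' r (by simp), rfl⟩
      have rest := ih ws' (by simpa using hl) (fun a ha => hw a (by simp [ha]))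
        (fun a ha => hw' a (by simp [ha])) (l⁻¹ * x * r)
      have : ws.prod⁻¹ * (l⁻¹ * x * r) * ws'.prod =
          (l :: ws).prod⁻¹ * x * (r :: ws').prod := by
        simp [mul_assoc]
      rw [this] at rest
      exact Relation.EqvGen.trans _ _ _ step rest

theorem two_sided_cayley_two_components {G : Type*} [Group G] (L R : Set G)
    (hLi : L⁻¹ = L) (hRi : R⁻¹ = R) (h : TwoSCayley L R)
    (hfac : ∀ g : G, ∃ x ∈ Subgroup.closure L, ∃ y ∈ Subgroup.closure R, g = x * y)
    (hpar : ¬ ∃ w w' : List G, (∀ a ∈ w, a ∈ L) ∧ (∀ a ∈ w', a ∈ R) ∧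
      (w.length + w'.length) % 2 = 1 ∧ w.prod * w'.prod = 1) :
    ∃ a b : G, ¬ Relation.EqvGen (twoSidedArc L R) a b ∧
      ∀ c : G, Relation.EqvGen (twoSidedArc L R) c a ∨
        Relation.EqvGen (twoSidedArc L R) c b := by
  obtain ⟨⟨l₀, hl₀⟩, ⟨r₀, hr₀⟩, -, -, -⟩ := h
  -- parity predicate
  set P : G → ℕ → Prop := fun g i =>
    ∃ w w' : List G, (∀ a ∈ w, a ∈ L) ∧ (∀ a ∈ w', a ∈ R) ∧
      g = w.prod * w'.prod ∧ (w.length + w'.length) % 2 = i with hP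
  -- exclusivity of parities
  have hexcl : ∀ g : G, P g 0 → P g 1 → False := by
    intro g ⟨w1, w1', h1, h1', e1, p1⟩ ⟨w2, w2', h2, h2', e2, p2⟩
    obtain ⟨v2, hv2, pv2, lv2⟩ := word_inv hLi w2 h2
    obtain ⟨v2', hv2', pv2', lv2'⟩ := word_inv hRi w2' h2'
    apply hpar
    refine ⟨v2 ++ w1, w1' ++ v2', ?_, ?_, ?_, ?_⟩
    · intro a ha; rcases List.mem_append.mp ha with hh | hh
      exacts [hv2 a hh, h1 a hh]
    · intro a ha; rcases List.mem_append.mp ha with hh | hh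
      exacts [h1' a hh, hv2' a hh]
    · simp only [List.length_append, lv2, lv2']
      omega
    · have : w1.prod * w1'.prod = w2.prod * w2'.prod := by rw [← e1, ← e2]
      simp only [List.prod_append, pv2, pv2']
      calc w2.prod⁻¹ * w1.prod * (w1'.prod * w2'.prod⁻¹)
          = w2.prod⁻¹ * (w1.prod * w1'.prod) * w2'.prod⁻¹ := by group
        _ = w2.prod⁻¹ * (w2.prod * w2'.prod) * w2'.prod⁻¹ := by rw [this]
        _ = 1 := by group
  -- every element has a parity
  have htot : ∀ g : G, P g 0 ∨ P g 1 := by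
    intro g
    obtain ⟨x, hx, y, hy, rfl⟩ := hfac g
    obtain ⟨w, hw, pw⟩ := word_of_closure hLi hx
    obtain ⟨w', hw', pw'⟩ := word_of_closure hRi hy
    rcases Nat.mod_two_eq_zero_or_one (w.length + w'.length) with hh | hh
    · exact Or.inl ⟨w, w', hw, hw', by rw [pw, pw'], hh⟩
    · exact Or.inr ⟨w, w', hw, hw', by rw [pw, pw'], hh⟩
  -- parity is invariant along the equivalence relation
  have hinv : ∀ a b : G, Relation.EqvGen (twoSidedArc L R) a b →
      ∀ i, (P a i ↔ P b i) := by
    intro a b hab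
    induction hab with
    | rel x y hxy =>
      obtain ⟨l, hl, r, hr, rfl⟩ := hxy
      intro i
      constructor
      · rintro ⟨w, w', hw, hw', rfl, hp⟩
        have hli : l⁻¹ ∈ L := by rw [← hLi]; simpa using hl
        refine ⟨l⁻¹ :: w, w' ++ [r], ?_, ?_, ?_, ?_⟩
        · intro a ha; simp only [List.mem_cons] at ha
          rcases ha with rfl | ha; exacts [hli, hw a ha]
        · intro a ha; rcases List.mem_append.mp ha with ha | ha
          · exact hw' a ha
          · simp at ha; subst ha; exact hr
        · simp [mul_assoc]
        · simp only [List.length_cons, List.length_append, List.length_singleton, List.length_nil]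
          omega
      · rintro ⟨w, w', hw, hw', he, hp⟩
        have hri : r⁻¹ ∈ R := by rw [← hRi]; simpa using hr
        refine ⟨l :: w, w' ++ [r⁻¹], ?_, ?_, ?_, ?_⟩
        · intro a ha; simp only [List.mem_cons] at ha
          rcases ha with rfl | ha; exacts [hl, hw a ha]
        · intro a ha; rcases List.mem_append.mp ha with ha | ha
          · exact hw' a ha
          · simp at ha; subst ha; exact hri
        · have : x = l * (l⁻¹ * x * r) * r⁻¹ := by group
          rw [this, he]; simp [mul_assoc]
        · simp only [List.length_cons, List.length_append, List.length_singleton, List.length_nil]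
          omega
    | refl x => intro i; rfl
    | symm x y _ ih => intro i; exact (ih i).symm
    | trans x y z _ _ ih1 ih2 => intro i; exact (ih1 i).trans (ih2 i)
  -- elements of parity 0 are connected to 1
  have hconn0 : ∀ c : G, P c 0 → Relation.EqvGen (twoSidedArc L R) c 1 := by
    rintro c ⟨w, w', hw, hw', rfl, hp⟩
    obtain ⟨v, hv, pv, lv⟩ := word_inv hLi w hw
    -- pad v and w' to equal length
    obtain ⟨v1, hv1, pv1, lv1⟩ := word_pad hLi hl₀ ((max v.length w'.length - v.length) / 2) v hv
    obtain ⟨v2, hv2, pv2, lv2⟩ := word_pad hRi hr₀ ((max v.length w'.length - w'.length) / 2) w' hw'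
    have hlen : v1.length = v2.length := by
      rw [lv1, lv2]
      have : v.length % 2 = w'.length % 2 := by omega
      omega
    have := eqvGen_of_words L R v1 v2 hlen hv1 hv2 1
    have he : v1.prod⁻¹ * 1 * v2.prod = w.prod * w'.prod := by
      rw [pv1, pv2, pv]; group
    rw [he] at this
    exact Relation.EqvGen.symm _ _ this
  -- elements of parity 1 are connected to l₀
  have hconn1 : ∀ c : G, P c 1 → Relation.EqvGen (twoSidedArc L R) c l₀ := by
    rintro c ⟨w, w', hw, hw', rfl, hp⟩
    obtain ⟨v, hv, pv, lv⟩ := word_inv hLi w hw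
    have hv' : ∀ a ∈ l₀ :: v, a ∈ L := by
      intro a ha; simp only [List.mem_cons] at ha
      rcases ha with rfl | ha; exacts [hl₀, hv a ha]
    obtain ⟨v1, hv1, pv1, lv1⟩ := word_pad hLi hl₀
      ((max (v.length + 1) w'.length - (v.length + 1)) / 2) (l₀ :: v) hv'
    obtain ⟨v2, hv2, pv2, lv2⟩ := word_pad hRi hr₀
      ((max (v.length + 1) w'.length - w'.length) / 2) w' hw'
    have hlen : v1.length = v2.length := by
      rw [lv1, lv2]
      simp only [List.length_cons]
      have : (v.length + 1) % 2 = w'.length % 2 := by omega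
      omega
    have := eqvGen_of_words L R v1 v2 hlen hv1 hv2 l₀
    have he : v1.prod⁻¹ * l₀ * v2.prod = w.prod * w'.prod := by
      rw [pv1, pv2]
      simp only [List.prod_cons, pv]
      group
    rw [he] at this
    exact Relation.EqvGen.symm _ _ this
  refine ⟨1, l₀, ?_, ?_⟩
  · intro hcon
    have h1 : P (1 : G) 0 := ⟨[], [], by simp, by simp, by simp, by simp⟩
    have hl : P l₀ 1 := ⟨[l₀], [], by simpa using hl₀, by simp, by simp, by simp⟩
    exact hexcl l₀ ((hinv 1 l₀ hcon 0).mp h1) hl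
  · intro c
    rcases htot c with hc | hc
    · exact Or.inl (hconn0 c hc)
    · exact Or.inr (hconn1 c hc)
end

section
/- Let G be a group, let L, R be nonempty subsets of G, let x, y ∈ G, and let σ be an automorphism of G. Then the following are equivalent: (L,R) has the 2S-Cayley property; (R,L) has the 2S-Cayley property; (σ(L), σ(R)) has the 2S-Cayley property; (x⁻¹·L·x, y⁻¹·R·y) has the 2S-Cayley property. -/
open Pointwise

section Aux

variable {G : Type*} [Group G] {S T A B L R : Set G} {g a b x y : G}

lemma mem_conjSet : a ∈ conjSet g S ↔ g * a * g⁻¹ ∈ S := by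
  constructor
  · rintro ⟨s, hs, rfl⟩
    have h : g * (g⁻¹ * s * g) * g⁻¹ = s := by group
    rwa [h]
  · intro h
    exact ⟨_, h, by group⟩

lemma mem_triple : a ∈ A * {g} * B ↔ ∃ p ∈ A, ∃ q ∈ B, a = p * g * q := by
  simp only [Set.mem_mul, Set.mem_singleton_iff]
  constructor
  · rintro ⟨u, ⟨p, hp, v, rfl, rfl⟩, q, hq, rfl⟩
    exact ⟨p, hp, q, hq, rfl⟩
  · rintro ⟨p, hp, q, hq, rfl⟩
    exact ⟨p * g, ⟨p, hp, g, rfl, rfl⟩, q, hq, rfl⟩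

lemma conjSet_inv : conjSet g (S⁻¹) = (conjSet g S)⁻¹ := by
  ext a
  rw [Set.mem_inv, mem_conjSet, mem_conjSet, Set.mem_inv]
  have h : (g * a * g⁻¹)⁻¹ = g * a⁻¹ * g⁻¹ := by group
  rw [h]

lemma conjSet_conjSet : conjSet g (conjSet x S) = conjSet (x * g) S := by
  ext a
  rw [mem_conjSet, mem_conjSet, mem_conjSet]
  have h : x * (g * a * g⁻¹) * x⁻¹ = (x * g) * a * (x * g)⁻¹ := by group
  rw [h]

lemma conjSet_one : conjSet (1 : G) S = S := by
  ext a; rw [mem_conjSet]; simp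

lemma conjSet_mul : conjSet g (A * B) = conjSet g A * conjSet g B := by
  ext a
  rw [mem_conjSet]
  constructor
  · rintro ⟨p, hp, q, hq, hpq⟩
    refine ⟨g⁻¹ * p * g, ⟨p, hp, rfl⟩, g⁻¹ * q * g, ⟨q, hq, rfl⟩, ?_⟩
    have h : a = g⁻¹ * (g * a * g⁻¹) * g := by group
    rw [h, ← hpq]; group
  · rintro ⟨p, hp, q, hq, rfl⟩
    rw [mem_conjSet] at hp hq
    exact ⟨g * p * g⁻¹, hp, g * q * g⁻¹, hq, by group⟩

lemma one_mem_mul_inv (h : S.Nonempty) : (1 : G) ∈ S * S⁻¹ := by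
  obtain ⟨s, hs⟩ := h
  exact ⟨s, hs, s⁻¹, Set.inv_mem_inv.2 hs, by simp⟩

lemma mem_triple_inv : a ∈ A * {g} * B ↔ a⁻¹ ∈ B⁻¹ * {g⁻¹} * A⁻¹ := by
  rw [mem_triple, mem_triple]
  constructor
  · rintro ⟨p, hp, q, hq, rfl⟩
    exact ⟨q⁻¹, Set.inv_mem_inv.2 hq, p⁻¹, Set.inv_mem_inv.2 hp, by group⟩
  · rintro ⟨q, hq, p, hp, h⟩
    refine ⟨p⁻¹, Set.mem_inv.1 hp, q⁻¹, Set.mem_inv.1 hq, ?_⟩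
    have ha : a = (q * g⁻¹ * p)⁻¹ := by rw [← h]; simp
    rw [ha]; group

lemma twoSCayley_symm : TwoSCayley L R → TwoSCayley R L := by
  rintro ⟨hLne, hRne, hA, hB, hC⟩
  refine ⟨hRne, hLne, ?_, ?_, ?_⟩
  · intro g
    ext a
    conv_lhs => rw [mem_triple_inv]
    conv_rhs => rw [mem_triple_inv]
    rw [inv_inv, inv_inv, hA g⁻¹]
  · intro g
    rw [Set.eq_empty_iff_forall_notMem]
    rintro a ⟨haR, haL⟩
    rw [mem_conjSet] at haR
    have hmem : g * a * g⁻¹ ∈ conjSet g⁻¹ L ∩ R := by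
      refine ⟨mem_conjSet.2 ?_, haR⟩
      have h : g⁻¹ * (g * a * g⁻¹) * g⁻¹⁻¹ = a := by group
      rwa [h]
    rw [hB g⁻¹] at hmem
    exact hmem
  · intro g
    rw [Set.eq_singleton_iff_unique_mem]
    constructor
    · exact ⟨mem_conjSet.2 (by simpa using one_mem_mul_inv hRne), one_mem_mul_inv hLne⟩
    · rintro a ⟨haR, haL⟩
      rw [mem_conjSet] at haR
      have hmem : g * a * g⁻¹ ∈ conjSet g⁻¹ (L * L⁻¹) ∩ (R * R⁻¹) := by
        refine ⟨mem_conjSet.2 ?_, haR⟩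
        have h : g⁻¹ * (g * a * g⁻¹) * g⁻¹⁻¹ = a := by group
        rwa [h]
      rw [hC g⁻¹, Set.mem_singleton_iff] at hmem
      have ha : a = g⁻¹ * (g * a * g⁻¹) * g := by group
      rw [ha, hmem]; group

lemma image_inv_eq (σ : G ≃* G) : (σ '' S)⁻¹ = σ '' (S⁻¹) := by
  ext b
  simp only [Set.mem_inv, Set.mem_image]
  constructor
  · rintro ⟨s, hs, h⟩
    refine ⟨s⁻¹, by simpa using hs, ?_⟩
    rw [map_inv, h]; simp
  · rintro ⟨t, ht, rfl⟩
    exact ⟨t⁻¹, by simpa using ht, by rw [map_inv]⟩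

lemma image_conjSet (σ : G ≃* G) : σ '' conjSet g S = conjSet (σ g) (σ '' S) := by
  ext b
  rw [mem_conjSet]
  constructor
  · rintro ⟨t, ht, rfl⟩
    obtain ⟨s, hs, rfl⟩ := ht
    refine ⟨s, hs, ?_⟩
    rw [← map_inv, ← map_mul, ← map_mul]
    congr 1
    group
  · rintro ⟨u, hu, h⟩
    refine ⟨g⁻¹ * u * g, ⟨u, hu, rfl⟩, ?_⟩
    have hb : b = (σ g)⁻¹ * σ u * σ g := by rw [h]; group
    rw [hb, map_mul, map_mul, map_inv]

lemma twoSCayley_image (σ : G ≃* G) : TwoSCayley L R → TwoSCayley (σ '' L) (σ '' R) := by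
  rintro ⟨hLne, hRne, hA, hB, hC⟩
  refine ⟨hLne.image σ, hRne.image σ, ?_, ?_, ?_⟩
  · intro g
    have hg : σ (σ.symm g) = g := σ.apply_symm_apply g
    rw [image_inv_eq, image_inv_eq, ← hg, ← Set.image_singleton (f := σ),
      ← Set.image_mul, ← Set.image_mul, ← Set.image_mul, ← Set.image_mul,
      hA (σ.symm g)]
  · intro g
    have hg : σ (σ.symm g) = g := σ.apply_symm_apply g
    rw [← hg, ← image_conjSet, ← Set.image_inter σ.injective, hB (σ.symm g),
      Set.image_empty]
  · intro g
    have hg : σ (σ.symm g) = g := σ.apply_symm_apply g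
    rw [image_inv_eq, image_inv_eq, ← Set.image_mul, ← Set.image_mul, ← hg,
      ← image_conjSet, ← Set.image_inter σ.injective, hC (σ.symm g)]
    simp

lemma mem_triple_conj : a ∈ conjSet x A * {g} * conjSet y B ↔
    x * a * y⁻¹ ∈ A * {x * g * y⁻¹} * B := by
  rw [mem_triple, mem_triple]
  constructor
  · rintro ⟨p, hp, q, hq, rfl⟩
    rw [mem_conjSet] at hp hq
    exact ⟨x * p * x⁻¹, hp, y * q * y⁻¹, hq, by group⟩
  · rintro ⟨p, hp, q, hq, h⟩
    refine ⟨x⁻¹ * p * x, mem_conjSet.2 ?_, y⁻¹ * q * y, mem_conjSet.2 ?_, ?_⟩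
    · have h1 : x * (x⁻¹ * p * x) * x⁻¹ = p := by group
      rwa [h1]
    · have h1 : y * (y⁻¹ * q * y) * y⁻¹ = q := by group
      rwa [h1]
    · have h1 : a = x⁻¹ * (x * a * y⁻¹) * y := by group
      rw [h1, h]; group

lemma twoSCayley_conj : TwoSCayley L R → TwoSCayley (conjSet x L) (conjSet y R) := by
  rintro ⟨hLne, hRne, hA, hB, hC⟩
  refine ⟨hLne.image _, hRne.image _, ?_, ?_, ?_⟩
  · intro g
    ext a
    rw [← conjSet_inv, ← conjSet_inv, mem_triple_conj, mem_triple_conj,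
      hA (x * g * y⁻¹)]
  · intro g
    rw [conjSet_conjSet, Set.eq_empty_iff_forall_notMem]
    rintro a ⟨haL, haR⟩
    rw [mem_conjSet] at haL haR
    have hmem : y * a * y⁻¹ ∈ conjSet (x * g * y⁻¹) L ∩ R := by
      refine ⟨mem_conjSet.2 ?_, haR⟩
      have h : (x * g * y⁻¹) * (y * a * y⁻¹) * (x * g * y⁻¹)⁻¹ =
          (x * g) * a * (x * g)⁻¹ := by group
      rwa [h]
    rw [hB (x * g * y⁻¹)] at hmem
    exact hmem
  · intro g
    rw [← conjSet_inv, ← conjSet_inv, ← conjSet_mul, ← conjSet_mul, conjSet_conjSet,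
      Set.eq_singleton_iff_unique_mem]
    constructor
    · exact ⟨mem_conjSet.2 (by rw [mul_one, mul_inv_cancel]; exact one_mem_mul_inv hLne),
        mem_conjSet.2 (by rw [mul_one, mul_inv_cancel]; exact one_mem_mul_inv hRne)⟩
    · rintro a ⟨haL, haR⟩
      rw [mem_conjSet] at haL haR
      have hmem : y * a * y⁻¹ ∈ conjSet (x * g * y⁻¹) (L * L⁻¹) ∩ (R * R⁻¹) := by
        refine ⟨mem_conjSet.2 ?_, haR⟩
        have h : (x * g * y⁻¹) * (y * a * y⁻¹) * (x * g * y⁻¹)⁻¹ =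
            (x * g) * a * (x * g)⁻¹ := by group
        rwa [h]
      rw [hC (x * g * y⁻¹), Set.mem_singleton_iff] at hmem
      have ha : a = y⁻¹ * (y * a * y⁻¹) * y := by group
      rw [ha, hmem]; group

end Aux

theorem twoSCayley_invariance {G : Type*} [Group G] (L R : Set G)
    (hL : L.Nonempty) (hR : R.Nonempty) (x y : G) (σ : G ≃* G) :
    (TwoSCayley L R ↔ TwoSCayley R L) ∧
    (TwoSCayley L R ↔ TwoSCayley (σ '' L) (σ '' R)) ∧
    (TwoSCayley L R ↔ TwoSCayley (conjSet x L) (conjSet y R)) := by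
  refine ⟨⟨twoSCayley_symm, twoSCayley_symm⟩, ⟨twoSCayley_image σ, ?_⟩,
    ⟨twoSCayley_conj, ?_⟩⟩
  · intro h
    have h2 := twoSCayley_image σ.symm h
    have e1 : ⇑σ.symm '' (⇑σ '' L) = L := by
      simp [Set.image_image]
    have e2 : ⇑σ.symm '' (⇑σ '' R) = R := by
      simp [Set.image_image]
    rwa [e1, e2] at h2
  · intro h
    have h2 := twoSCayley_conj (x := x⁻¹) (y := y⁻¹) h
    rwa [conjSet_conjSet, conjSet_conjSet, mul_inv_cancel, mul_inv_cancel,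
      conjSet_one, conjSet_one] at h2
end

section
/- Let G be a group and let L, R be nonempty subsets of G. Then the map g ↦ g⁻¹ is an isomorphism from 2SCay(G;L,R) to 2SCay(G;R,L): for all x, y ∈ G, there is an arc from x to y in 2SCay(G;L,R) if and only if there is an arc from x⁻¹ to y⁻¹ in 2SCay(G;R,L). -/
open Pointwise

theorem two_sided_cayley_inv_iso {G : Type*} [Group G] (L R : Set G)
    (hL : L.Nonempty) (hR : R.Nonempty) :
    ∀ x y : G, twoSidedArc L R x y ↔ twoSidedArc R L x⁻¹ y⁻¹ := by
  intro x y
  constructor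
  · rintro ⟨l, hl, r, hr, rfl⟩
    exact ⟨r, hr, l, hl, by group⟩
  · rintro ⟨r, hr, l, hl, h⟩
    refine ⟨l, hl, r, hr, ?_⟩
    have := congrArg (·⁻¹) h
    simp at this
    rw [this]; group
end

section
/- Let G be a group, let L, R be subsets of G such that (L,R) has the 2S-Cayley property, and let Γ = 2SCay(G;L,R). Then every right translation ρ_g : v ↦ v·g (g ∈ G) is an automorphism of Γ (i.e. for all x, y: there is an arc from x to y iff there is an arc from x·g to y·g) if and only if L⁻¹·g·R = L⁻¹·R·g for every g ∈ G. Moreover, if this condition holds, then for all x, y ∈ G there is an arc from x to y in Γ if and only if y·x⁻¹ ∈ L⁻¹·R. -/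
open Pointwise

lemma arc_iff_mem {G : Type*} [Group G] (L R : Set G) (x y : G) :
    twoSidedArc L R x y ↔ y ∈ L⁻¹ * {x} * R := by
  simp only [twoSidedArc, Set.mem_mul, Set.mem_inv, Set.mem_singleton_iff]
  constructor
  · rintro ⟨l, hl, r, hr, rfl⟩
    exact ⟨l⁻¹ * x, ⟨l⁻¹, by simpa using hl, x, rfl, rfl⟩, r, hr, rfl⟩
  · rintro ⟨u, ⟨a, ha, b, rfl, rfl⟩, r, hr, rfl⟩
    exact ⟨a⁻¹, ha, r, hr, by group⟩

lemma mem_mul_singleton {G : Type*} [Group G] (S : Set G) (x y : G) :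
    y ∈ S * {x} ↔ y * x⁻¹ ∈ S := by
  simp only [Set.mul_singleton, Set.mem_image]
  constructor
  · rintro ⟨a, ha, rfl⟩; simpa using ha
  · intro hy; exact ⟨y * x⁻¹, hy, by group⟩

theorem two_sided_cayley_right_translations {G : Type*} [Group G] (L R : Set G)
    (h : TwoSCayley L R) :
    ((∀ g x y : G, twoSidedArc L R x y ↔ twoSidedArc L R (x * g) (y * g)) ↔
      (∀ g : G, L⁻¹ * {g} * R = L⁻¹ * R * {g})) ∧
    ((∀ g : G, L⁻¹ * {g} * R = L⁻¹ * R * {g}) →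
      ∀ x y : G, twoSidedArc L R x y ↔ y * x⁻¹ ∈ L⁻¹ * R) := by
  have key : ∀ hcond : (∀ g : G, L⁻¹ * {g} * R = L⁻¹ * R * {g}),
      ∀ x y : G, twoSidedArc L R x y ↔ y * x⁻¹ ∈ L⁻¹ * R := by
    intro hcond x y
    rw [arc_iff_mem, hcond x, mem_mul_singleton]
  constructor
  · constructor
    · intro hauto g
      ext z
      have h1 : twoSidedArc L R g z ↔ twoSidedArc L R 1 (z * g⁻¹) := by
        simpa using hauto g⁻¹ g z
      rw [← arc_iff_mem, h1, arc_iff_mem, mem_mul_singleton,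
        show ({(1:G)} : Set G) = 1 from rfl, mul_one]
    · intro hcond g x y
      rw [key hcond, key hcond]
      rw [show y * g * (x * g)⁻¹ = y * x⁻¹ by group]
  · exact key
end

section
/- Let G be a group, let L, R be subsets of G such that (L,R) has the 2S-Cayley property, and let Γ = 2SCay(G;L,R). Then every left translation v ↦ g⁻¹·v (g ∈ G) is an automorphism of Γ (i.e. for all x, y: there is an arc from x to y iff there is an arc from g⁻¹·x to g⁻¹·y) if and only if L⁻¹·g·R = g·L⁻¹·R for every g ∈ G. Moreover, if this condition holds, then for all x, y ∈ G there is an arc from x to y in Γ if and only if x⁻¹·y ∈ L⁻¹·R. -/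
open Pointwise

lemma mem_single_mul {G : Type*} [Group G] (S : Set G) (g y : G) :
    y ∈ ({g} : Set G) * S ↔ g⁻¹ * y ∈ S := by
  simp only [Set.singleton_mul, Set.mem_image]
  constructor
  · rintro ⟨b, hb, rfl⟩; simpa using hb
  · intro hb; exact ⟨g⁻¹ * y, hb, by group⟩

theorem two_sided_cayley_left_translations {G : Type*} [Group G] (L R : Set G)
    (h : TwoSCayley L R) :
    ((∀ g x y : G, twoSidedArc L R x y ↔ twoSidedArc L R (g⁻¹ * x) (g⁻¹ * y)) ↔
      (∀ g : G, L⁻¹ * {g} * R = {g} * (L⁻¹ * R))) ∧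
    ((∀ g : G, L⁻¹ * {g} * R = {g} * (L⁻¹ * R)) →
      ∀ x y : G, twoSidedArc L R x y ↔ x⁻¹ * y ∈ L⁻¹ * R) := by
  have key : (∀ g : G, L⁻¹ * {g} * R = {g} * (L⁻¹ * R)) →
      ∀ x y : G, twoSidedArc L R x y ↔ x⁻¹ * y ∈ L⁻¹ * R := by
    intro hC x y
    rw [arc_iff_mem, hC x, mem_single_mul]
  refine ⟨⟨fun hAut g => ?_, fun hC g x y => ?_⟩, key⟩
  · have h1 : L⁻¹ * ({1} : Set G) * R = L⁻¹ * R := by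
      rw [Set.mul_singleton]; simp
    ext y
    have := (arc_iff_mem L R g y).symm.trans ((hAut g g y).trans
      (arc_iff_mem L R (g⁻¹ * g) (g⁻¹ * y)))
    rw [inv_mul_cancel, h1] at this
    rw [this, mem_single_mul]
  · rw [key hC, key hC]
    simp [mul_assoc]
end

section
/- Let G be a group, let L, R be nonempty subsets of G, and let Γ = 2SCay(G;L,R). Then: (i) for every x ∈ N_G(L) and y ∈ N_G(R), the map λ_{x,y} : g ↦ x⁻¹·g·y is an automorphism of Γ, i.e. for all g, h ∈ G there is an arc from g to h iff there is an arc from x⁻¹·g·y to x⁻¹·h·y; (ii) every automorphism σ of the group G with σ(L) = L and σ(R) = R is an automorphism of Γ; and (iii) the set K = {λ_{x,y} : x ∈ N_G(L), y ∈ N_G(R)} acts transitively on G (for all g, h ∈ G there is an element of K mapping g to h) if and only if G = N_G(L)·N_G(R). -/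
open Pointwise

section helpers
variable {G : Type*} [Group G] {S : Set G} {x y s : G}

lemma mem_setNorm_iff : x ∈ setNorm S ↔ ∀ g, x⁻¹ * g ∈ S ↔ g * x⁻¹ ∈ S := by
  simp [setNorm, Set.ext_iff, Set.mem_mul]

lemma sn_conj (hx : x ∈ setNorm S) (hs : s ∈ S) : x⁻¹ * s * x ∈ S := by
  rw [mem_setNorm_iff] at hx
  have := (hx (s * x)).2 (by simpa using hs)
  simpa [mul_assoc] using this

lemma sn_conj' (hx : x ∈ setNorm S) (hs : s ∈ S) : x * s * x⁻¹ ∈ S := by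
  rw [mem_setNorm_iff] at hx
  exact (hx (x * s)).1 (by simpa [mul_assoc] using hs)

lemma sn_inv (hx : x ∈ setNorm S) : x⁻¹ ∈ setNorm S := by
  rw [mem_setNorm_iff]
  intro g
  constructor
  · intro h
    have := sn_conj hx h
    simpa [mul_assoc] using this
  · intro h
    have := sn_conj' hx h
    simpa [mul_assoc] using this

lemma sn_mul (hx : x ∈ setNorm S) (hy : y ∈ setNorm S) : x * y ∈ setNorm S := by
  rw [mem_setNorm_iff]
  intro g
  have hx' := (mem_setNorm_iff).1 hx
  have hy' := (mem_setNorm_iff).1 hy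
  constructor
  · intro h
    have h1 : y⁻¹ * (x⁻¹ * g) ∈ S := by simpa [mul_assoc] using h
    have h2 := (hy' (x⁻¹ * g)).1 h1
    have h3 : x⁻¹ * (g * y⁻¹) ∈ S := by simpa [mul_assoc] using h2
    have h4 := (hx' (g * y⁻¹)).1 h3
    simpa [mul_assoc] using h4
  · intro h
    have h1 : (g * y⁻¹) * x⁻¹ ∈ S := by simpa [mul_assoc] using h
    have h2 := (hx' (g * y⁻¹)).2 h1
    have h3 : (x⁻¹ * g) * y⁻¹ ∈ S := by simpa [mul_assoc] using h2
    have h4 := (hy' (x⁻¹ * g)).2 h3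
    simpa [mul_assoc] using h4

lemma arc_map {L R : Set G} (hx : x ∈ setNorm L) (hy : y ∈ setNorm R) {g h : G}
    (ha : twoSidedArc L R g h) : twoSidedArc L R (x⁻¹ * g * y) (x⁻¹ * h * y) := by
  obtain ⟨l, hl, r, hr, rfl⟩ := ha
  exact ⟨x⁻¹ * l * x, sn_conj hx hl, y⁻¹ * r * y, sn_conj hy hr, by group⟩

end helpers

theorem two_sided_cayley_vertex_transitive {G : Type*} [Group G] (L R : Set G)
    (hL : L.Nonempty) (hR : R.Nonempty) :
    (∀ x ∈ setNorm L, ∀ y ∈ setNorm R, ∀ g h : G,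
        twoSidedArc L R g h ↔ twoSidedArc L R (x⁻¹ * g * y) (x⁻¹ * h * y)) ∧
    (∀ σ : G ≃* G, σ '' L = L → σ '' R = R →
        ∀ g h : G, twoSidedArc L R g h ↔ twoSidedArc L R (σ g) (σ h)) ∧
    ((∀ g h : G, ∃ x ∈ setNorm L, ∃ y ∈ setNorm R, x⁻¹ * g * y = h) ↔
        setNorm L * setNorm R = Set.univ) := by
  refine ⟨?_, ?_, ?_⟩
  · intro x hx y hy g h
    constructor
    · exact arc_map hx hy
    · intro ha
      have := arc_map (sn_inv hx) (sn_inv hy) ha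
      simpa [mul_assoc] using this
  · intro σ hσL hσR g h
    constructor
    · rintro ⟨l, hl, r, hr, rfl⟩
      refine ⟨σ l, hσL ▸ ⟨l, hl, rfl⟩, σ r, hσR ▸ ⟨r, hr, rfl⟩, by simp [map_mul]⟩
    · rintro ⟨l', hl', r', hr', he⟩
      obtain ⟨l, hl, rfl⟩ : ∃ l ∈ L, σ l = l' := by
        rw [← hσL] at hl'; obtain ⟨l, hl, h⟩ := hl'; exact ⟨l, hl, h⟩
      obtain ⟨r, hr, rfl⟩ : ∃ r ∈ R, σ r = r' := by
        rw [← hσR] at hr'; obtain ⟨r, hr, h⟩ := hr'; exact ⟨r, hr, h⟩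
      refine ⟨l, hl, r, hr, σ.injective ?_⟩
      simpa [map_mul] using he
  · constructor
    · intro htr
      apply Set.eq_univ_of_forall
      intro a
      obtain ⟨x, hx, y, hy, he⟩ := htr 1 a
      exact ⟨x⁻¹, sn_inv hx, y, hy, by simpa using he⟩
    · intro heq g h
      have hg : g ∈ setNorm L * setNorm R := heq.symm ▸ Set.mem_univ g
      have hh : h ∈ setNorm L * setNorm R := heq.symm ▸ Set.mem_univ h
      obtain ⟨x, hx, u, hu, rfl⟩ := hg
      obtain ⟨x', hx', u', hu', rfl⟩ := hh
      exact ⟨x * x'⁻¹, sn_mul hx (sn_inv hx'), u⁻¹ * u', sn_mul (sn_inv hu) hu', by group⟩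
end

section
/- Let G be a group with identity e and let L, R be nonempty subsets of G such that G = N_G(L)·N_G(R). Then (L,R) has the 2S-Cayley property if and only if the following all hold: (1') L⁻¹·R = L·R⁻¹; (2') L ∩ R = ∅; (3') (L⁻¹·L) ∩ (R⁻¹·R) = {e}. -/
open Pointwise

lemma norm_conj {G : Type*} [Group G] {S : Set G} {a : G} (ha : a ∈ setNorm S)
    {s : G} (hs : s ∈ S) : a * s * a⁻¹ ∈ S := by
  have h : a * s ∈ S * {a} := by
    rw [← ha]
    exact Set.mul_mem_mul (Set.mem_singleton a) hs
  rw [Set.mem_mul] at h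
  obtain ⟨s', hs', y, hy, hye⟩ := h
  rw [Set.mem_singleton_iff] at hy
  rw [hy] at hye
  have : a * s * a⁻¹ = s' := by rw [← hye]; group
  rw [this]; exact hs'

lemma norm_conj' {G : Type*} [Group G] {S : Set G} {a : G} (ha : a ∈ setNorm S)
    {s : G} (hs : s ∈ S) : a⁻¹ * s * a ∈ S := by
  have h : s * a ∈ {a} * S := by
    rw [ha]
    exact Set.mul_mem_mul hs (Set.mem_singleton a)
  rw [Set.mem_mul] at h
  obtain ⟨y, hy, s', hs', hye⟩ := h
  rw [Set.mem_singleton_iff] at hy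
  rw [hy] at hye
  have : a⁻¹ * s * a = s' := by rw [mul_assoc, ← hye]; group
  rw [this]; exact hs'

lemma mem_mul3 {G : Type*} [Group G] {S T : Set G} {g x : G} :
    x ∈ S * {g} * T ↔ ∃ s ∈ S, ∃ t ∈ T, s * g * t = x := by
  constructor
  · rintro ⟨u, ⟨s, hs, w, hw, rfl⟩, t, ht, rfl⟩
    rw [Set.mem_singleton_iff] at hw
    exact ⟨s, hs, t, ht, by rw [hw]⟩
  · rintro ⟨s, hs, t, ht, rfl⟩
    exact ⟨s * g, ⟨s, hs, g, rfl, rfl⟩, t, ht, rfl⟩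

theorem twoSCayley_simplified {G : Type*} [Group G] (L R : Set G)
    (hL : L.Nonempty) (hR : R.Nonempty)
    (hfac : setNorm L * setNorm R = Set.univ) :
    TwoSCayley L R ↔
      (L⁻¹ * R = L * R⁻¹ ∧ L ∩ R = ∅ ∧ (L⁻¹ * L) ∩ (R⁻¹ * R) = {1}) := by
  have hdec : ∀ g : G, ∃ a ∈ setNorm L, ∃ b ∈ setNorm R, a * b = g := by
    intro g
    have : g ∈ setNorm L * setNorm R := by rw [hfac]; trivial
    rwa [Set.mem_mul] at this
  constructor
  · rintro ⟨-, -, h1, h2, h3⟩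
    refine ⟨?_, ?_, ?_⟩
    · have := h1 1
      simpa using this
    · have := h2 1
      simpa [conjSet] using this
    · apply Set.eq_singleton_iff_unique_mem.mpr
      constructor
      · obtain ⟨l, hl⟩ := hL; obtain ⟨r, hr⟩ := hR
        exact ⟨⟨l⁻¹, Set.inv_mem_inv.mpr hl, l, hl, by group⟩,
               ⟨r⁻¹, Set.inv_mem_inv.mpr hr, r, hr, by group⟩⟩
      · rintro x ⟨hxL, hxR⟩
        rw [Set.mem_mul] at hxL hxR
        obtain ⟨li, hli, l2, hl2, hxl⟩ := hxL
        obtain ⟨ri, hri, r2, hr2, hxr⟩ := hxR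
        have key := h3 (li⁻¹ * ri)
        have hmem : ri⁻¹ * x * ri ∈ conjSet (li⁻¹ * ri) (L * L⁻¹) ∩ (R * R⁻¹) := by
          constructor
          · exact ⟨l2 * li, Set.mul_mem_mul hl2 hli, by rw [← hxl]; group⟩
          · exact ⟨r2, hr2, ri, hri, by rw [← hxr]; group⟩
        rw [key, Set.mem_singleton_iff] at hmem
        have : x = ri * (ri⁻¹ * x * ri) * ri⁻¹ := by group
        rw [this, hmem]; group
  · rintro ⟨h1, h2, h3⟩
    refine ⟨hL, hR, ?_, ?_, ?_⟩
    · -- condition (1)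
      intro g
      obtain ⟨a, ha, b, hb, hab⟩ := hdec g
      ext x
      rw [mem_mul3, mem_mul3]
      constructor
      · rintro ⟨li, hli, r, hr, rfl⟩
        have hy : (a⁻¹ * li * a) * (b * r * b⁻¹) ∈ L⁻¹ * R := by
          refine Set.mul_mem_mul ?_ (norm_conj hb hr)
          rw [Set.mem_inv]
          have : (a⁻¹ * li * a)⁻¹ = a⁻¹ * li⁻¹ * a := by group
          rw [this]
          exact norm_conj' ha (Set.mem_inv.mp hli)
        rw [h1, Set.mem_mul] at hy
        obtain ⟨l', hl', ri', hri', hy'⟩ := hy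
        refine ⟨a * l' * a⁻¹, norm_conj ha hl', b⁻¹ * ri' * b, ?_, ?_⟩
        · rw [Set.mem_inv]
          have : (b⁻¹ * ri' * b)⁻¹ = b⁻¹ * ri'⁻¹ * b := by group
          rw [this]
          exact norm_conj' hb (Set.mem_inv.mp hri')
        · have hx : li * g * r = a * ((a⁻¹ * li * a) * (b * r * b⁻¹)) * b := by
            rw [← hab]; group
          rw [hx, ← hy', ← hab]; group
      · rintro ⟨l, hl, ri, hri, rfl⟩
        have hy : (a⁻¹ * l * a) * (b * ri * b⁻¹) ∈ L⁻¹ * R := by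
          rw [h1]
          refine Set.mul_mem_mul (norm_conj' ha hl) ?_
          rw [Set.mem_inv]
          have : (b * ri * b⁻¹)⁻¹ = b * ri⁻¹ * b⁻¹ := by group
          rw [this]
          exact norm_conj hb (Set.mem_inv.mp hri)
        rw [Set.mem_mul] at hy
        obtain ⟨li', hli', r', hr', hy'⟩ := hy
        refine ⟨a * li' * a⁻¹, ?_, b⁻¹ * r' * b, norm_conj' hb hr', ?_⟩
        · rw [Set.mem_inv]
          have : (a * li' * a⁻¹)⁻¹ = a * li'⁻¹ * a⁻¹ := by group
          rw [this]
          exact norm_conj ha (Set.mem_inv.mp hli')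
        · have hx : l * g * ri = a * ((a⁻¹ * l * a) * (b * ri * b⁻¹)) * b := by
            rw [← hab]; group
          rw [hx, ← hy', ← hab]; group
    · -- condition (2)
      intro g
      obtain ⟨a, ha, b, hb, hab⟩ := hdec g
      rw [Set.eq_empty_iff_forall_notMem]
      rintro x ⟨hxc, hxR⟩
      rw [conjSet, Set.mem_image] at hxc
      obtain ⟨l, hl, hlx⟩ := hxc
      have hx' : b * x * b⁻¹ = a⁻¹ * l * a := by rw [← hlx, ← hab]; group
      have hmem : b * x * b⁻¹ ∈ L ∩ R := ⟨hx' ▸ norm_conj' ha hl, norm_conj hb hxR⟩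
      rw [h2] at hmem
      exact Set.notMem_empty _ hmem
    · -- condition (3)
      intro g
      apply Set.eq_singleton_iff_unique_mem.mpr
      constructor
      · obtain ⟨l, hl⟩ := hL; obtain ⟨r, hr⟩ := hR
        constructor
        · exact ⟨1, ⟨l, hl, l⁻¹, Set.inv_mem_inv.mpr hl, by group⟩, by group⟩
        · exact ⟨r, hr, r⁻¹, Set.inv_mem_inv.mpr hr, by group⟩
      · rintro x ⟨hxc, hxR⟩
        rw [conjSet, Set.mem_image] at hxc
        obtain ⟨p, hp, hpx⟩ := hxc
        rw [Set.mem_mul] at hp hxR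
        obtain ⟨l1, hl1, l2i, hl2i, hpl⟩ := hp
        obtain ⟨r1, hr1, r2i, hr2i, hxr⟩ := hxR
        obtain ⟨a, ha, b, hb, hab⟩ := hdec (l1⁻¹ * g * r1)
        have hb' : b = a⁻¹ * (l1⁻¹ * g * r1) := by rw [← hab]; group
        have hx' : r1 * r2i = g⁻¹ * (l1 * l2i) * g := by
          rw [hxr, ← hpx, hpl]
        have key : a⁻¹ * (l2i * l1) * a = b * (r2i * r1) * b⁻¹ := by
          have h2' : b * (r2i * r1) * b⁻¹
              = a⁻¹ * l1⁻¹ * (g * (r1 * r2i) * g⁻¹) * l1 * a := by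
            rw [hb']; group
          rw [h2', hx']; group
        have hyL : a⁻¹ * (l2i * l1) * a ∈ L⁻¹ * L := by
          refine ⟨a⁻¹ * l2i * a, ?_, a⁻¹ * l1 * a, norm_conj' ha hl1, by group⟩
          rw [Set.mem_inv]
          have : (a⁻¹ * l2i * a)⁻¹ = a⁻¹ * l2i⁻¹ * a := by group
          rw [this]
          exact norm_conj' ha (Set.mem_inv.mp hl2i)
        have hyR : a⁻¹ * (l2i * l1) * a ∈ R⁻¹ * R := by
          refine ⟨b * r2i * b⁻¹, ?_, b * r1 * b⁻¹, norm_conj hb hr1, ?_⟩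
          · rw [Set.mem_inv]
            have : (b * r2i * b⁻¹)⁻¹ = b * r2i⁻¹ * b⁻¹ := by group
            rw [this]
            exact norm_conj hb (Set.mem_inv.mp hr2i)
          · rw [key]; group
        have hy1 : a⁻¹ * (l2i * l1) * a = 1 := by
          have hm : a⁻¹ * (l2i * l1) * a ∈ (L⁻¹ * L) ∩ (R⁻¹ * R) := ⟨hyL, hyR⟩
          rw [h3, Set.mem_singleton_iff] at hm
          exact hm
        have h5 : l2i * l1 = 1 := by
          have h6 : l2i * l1 = a * (a⁻¹ * (l2i * l1) * a) * a⁻¹ := by group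
          rw [h6, hy1]; group
        have h7 : l1 * l2i = 1 := by
          have := eq_inv_of_mul_eq_one_left h5
          rw [this]; group
        rw [← hpx, ← hpl, h7]; group
end

section
/- Let G be a group with identity e and let L, R be subsets of G such that (L,R) has the 2S-Cayley property. Then for every ℓ ∈ L, r ∈ R and x ∈ G, there exists a unique pair (ℓ', r') ∈ L × R such that ℓ'⁻¹·(ℓ⁻¹·x·r)·r' = x. Moreover, for this pair, the composite map g ↦ ℓ'⁻¹·(ℓ⁻¹·g·r)·r' is the identity map on G if and only if L·ℓ ∩ R·r ∩ Z(G) ≠ ∅. -/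
open Pointwise

/-- Key rigidity lemma from condition (3): a conjugate of an element of `L·L⁻¹`
lying in `R·R⁻¹` forces both to be trivial. -/
lemma twoS_key {G : Type*} [Group G] {L R : Set G}
    (h3 : ∀ g : G, conjSet g (L * L⁻¹) ∩ (R * R⁻¹) = {1})
    {g a b c d : G} (ha : a ∈ L) (hb : b ∈ L) (hc : c ∈ R) (hd : d ∈ R)
    (heq : g⁻¹ * (a * b⁻¹) * g = c * d⁻¹) : a = b ∧ c = d := by
  have hm : c * d⁻¹ ∈ conjSet g (L * L⁻¹) ∩ (R * R⁻¹) := by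
    refine ⟨⟨a * b⁻¹, Set.mul_mem_mul ha (Set.inv_mem_inv.mpr hb), heq⟩,
      Set.mul_mem_mul hc (Set.inv_mem_inv.mpr hd)⟩
  rw [h3] at hm
  have h1 : c * d⁻¹ = 1 := hm
  have h2 : a * b⁻¹ = 1 := by
    have h' := heq
    rw [h1] at h'
    have : a * b⁻¹ = g * 1 * g⁻¹ := by rw [← h']; group
    simpa using this
  exact ⟨mul_inv_eq_one.mp h2, mul_inv_eq_one.mp h1⟩

/-- Variant of the key lemma for `L⁻¹·L` and `R⁻¹·R`. -/
lemma twoS_key' {G : Type*} [Group G] {L R : Set G}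
    (h3 : ∀ g : G, conjSet g (L * L⁻¹) ∩ (R * R⁻¹) = {1})
    {g a b c d : G} (ha : a ∈ L) (hb : b ∈ L) (hc : c ∈ R) (hd : d ∈ R)
    (heq : g⁻¹ * (a⁻¹ * b) * g = c⁻¹ * d) : a = b ∧ c = d := by
  have hd' : d = c * (g⁻¹ * (a⁻¹ * b) * g) := by rw [heq]; group
  have hkey : (a * g * c⁻¹)⁻¹ * (b * a⁻¹) * (a * g * c⁻¹) = d * c⁻¹ := by
    rw [hd']; group
  obtain ⟨h1, h2⟩ := twoS_key h3 hb ha hd hc hkey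
  exact ⟨h1.symm, h2.symm⟩

theorem two_sided_cayley_unique_return {G : Type*} [Group G] (L R : Set G)
    (h : TwoSCayley L R) (l : G) (hl : l ∈ L) (r : G) (hr : r ∈ R) (x : G) :
    (∃! p : G × G, p.1 ∈ L ∧ p.2 ∈ R ∧ p.1⁻¹ * (l⁻¹ * x * r) * p.2 = x) ∧
    (∀ l' ∈ L, ∀ r' ∈ R, l'⁻¹ * (l⁻¹ * x * r) * r' = x →
      ((∀ g : G, l'⁻¹ * (l⁻¹ * g * r) * r' = g) ↔
        (L * {l} ∩ (R * {r}) ∩ (Subgroup.center G : Set G)).Nonempty)) := by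
  obtain ⟨-, -, h1, -, h3⟩ := h
  set y : G := l⁻¹ * x * r with hy
  -- existence of a returning pair
  have hmem : y ∈ L⁻¹ * {x} * R :=
    Set.mul_mem_mul (Set.mul_mem_mul (Set.inv_mem_inv.mpr hl) rfl) hr
  rw [h1 x] at hmem
  obtain ⟨u, hu, v, hv, huv⟩ := Set.mem_mul.mp hmem
  obtain ⟨a, ha, w, hw, haw⟩ := Set.mem_mul.mp hu
  obtain ⟨b, hb, hbv⟩ : ∃ b ∈ R, b⁻¹ = v := by
    rcases Set.mem_inv.mp hv with hv'
    exact ⟨v⁻¹, hv', inv_inv v⟩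
  have hwx : w = x := hw
  have hyab : y = a * x * b⁻¹ := by rw [← huv, ← haw, hwx, hbv]
  have hret : a⁻¹ * y * b = x := by rw [hyab]; group
  constructor
  · refine ⟨(a, b), ⟨ha, hb, hret⟩, ?_⟩
    rintro ⟨c, d⟩ ⟨hc, hd, heq2⟩
    have h4 : c⁻¹ * y * d = a⁻¹ * y * b := heq2.trans hret.symm
    have hdval : b = y⁻¹ * (a * (c⁻¹ * y * d)) := by rw [h4]; group
    have h5 : y⁻¹ * (a * c⁻¹) * y = b * d⁻¹ := by rw [hdval]; group
    obtain ⟨h6, h7⟩ := twoS_key h3 ha hc hb hd h5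
    simp [Prod.ext_iff, h6, h7]
  · intro l' hl' r' hr' hret'
    constructor
    · intro hall
      have h10 : r * r' = l * l' := by
        have hg := hall 1
        calc r * r' = (l * l') * (l'⁻¹ * (l⁻¹ * 1 * r) * r') := by group
          _ = (l * l') * 1 := by rw [hg]
          _ = l * l' := mul_one _
      have zc : ∀ g : G, g * (l * l') = (l * l') * g := by
        intro g
        calc g * (l * l') = g * (r * r') := by rw [h10]
          _ = (l * l') * (l'⁻¹ * (l⁻¹ * g * r) * r') := by group
          _ = (l * l') * g := by rw [hall g]
      have hll : l * l' = l' * l := by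
        have h11 := zc l'
        exact (mul_right_cancel (b := l') (by rw [mul_assoc, h11])).symm
      have hrr : r * r' = r' * r := by
        have h11 := zc r'
        rw [← h10] at h11
        exact (mul_right_cancel (b := r') (by rw [mul_assoc, h11])).symm
      refine ⟨l * l', ⟨⟨?_, ?_⟩, ?_⟩⟩
      · rw [hll]; exact Set.mul_mem_mul hl' rfl
      · rw [← h10, hrr]; exact Set.mul_mem_mul hr' rfl
      · exact Subgroup.mem_center_iff.mpr zc
    · rintro ⟨z, ⟨⟨hzL, hzR⟩, hzc⟩⟩
      obtain ⟨a', ha', u', hu', hau'⟩ := Set.mem_mul.mp hzL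
      obtain ⟨b', hb', v', hv', hbv'⟩ := Set.mem_mul.mp hzR
      have hu'l : u' = l := hu'
      have hv'r : v' = r := hv'
      have hzal : z = a' * l := by rw [← hau', hu'l]
      have hzbr : z = b' * r := by rw [← hbv', hv'r]
      have zc : ∀ g : G, g * z = z * g := Subgroup.mem_center_iff.mp hzc
      have zinvc : ∀ g : G, g * z⁻¹ = z⁻¹ * g := by
        intro g
        have hc : Commute g z := zc g
        exact hc.inv_right
      have hainv : a'⁻¹ = l * z⁻¹ := by
        have : a' = z * l⁻¹ := by rw [hzal]; group
        rw [this]; group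
      have hbinv : b'⁻¹ = r * z⁻¹ := by
        have : b' = z * r⁻¹ := by rw [hzbr]; group
        rw [this]; group
      have e1 : a'⁻¹ * l' = l * l' * z⁻¹ := by
        rw [hainv, mul_assoc, ← zinvc l', ← mul_assoc]
      have e2 : b'⁻¹ * r' = r * r' * z⁻¹ := by
        rw [hbinv, mul_assoc, ← zinvc r', ← mul_assoc]
      have hx_eq : x⁻¹ * (l * l') * x = r * r' := by
        have : x * (r * r') = (l * l') * x := by
          calc x * (r * r') = (l * l') * (l'⁻¹ * (l⁻¹ * x * r) * r') := by group
            _ = (l * l') * x := by rw [hret']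
        calc x⁻¹ * (l * l') * x = x⁻¹ * (l * l' * x) := by group
          _ = x⁻¹ * (x * (r * r')) := by rw [← this]
          _ = r * r' := by group
      have hkeyeq : x⁻¹ * (a'⁻¹ * l') * x = b'⁻¹ * r' := by
        rw [e1, e2]
        calc x⁻¹ * (l * l' * z⁻¹) * x = x⁻¹ * (l * l') * (z⁻¹ * x) := by group
          _ = x⁻¹ * (l * l') * (x * z⁻¹) := by rw [← zinvc x]
          _ = x⁻¹ * (l * l') * x * z⁻¹ := by group
          _ = r * r' * z⁻¹ := by rw [hx_eq]
      obtain ⟨hla, hrb⟩ := twoS_key' h3 ha' hl' hb' hr' hkeyeq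
      have hllz : l * l' = z := by
        have : a'⁻¹ * l' = 1 := by rw [← hla]; group
        rw [e1] at this
        calc l * l' = l * l' * z⁻¹ * z := by group
          _ = 1 * z := by rw [this]
          _ = z := one_mul z
      have hrrz : r * r' = z := by
        have : b'⁻¹ * r' = 1 := by rw [← hrb]; group
        rw [e2] at this
        calc r * r' = r * r' * z⁻¹ * z := by group
          _ = 1 * z := by rw [this]
          _ = z := one_mul z
      intro g
      calc l'⁻¹ * (l⁻¹ * g * r) * r' = (l * l')⁻¹ * g * (r * r') := by group
        _ = z⁻¹ * g * z := by rw [hllz, hrrz]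
        _ = z⁻¹ * (z * g) := by rw [mul_assoc, zc g]
        _ = g := by group
end

section
/- Let G be a group with identity e and let L, R be subsets of G such that (L,R) has the 2S-Cayley property. Let ℓ₁, ℓ₂ ∈ L and r₁, r₂ ∈ R, and let φ : G → G be the map φ(g) = ℓ₂·ℓ₁⁻¹·g·r₁·r₂⁻¹ (the composite of λ_{ℓ₁,r₁} with the inverse of λ_{ℓ₂,r₂}). If φ is not the identity map on G, then φ has no fixed point in G, i.e. φ is a derangement. -/
open Pointwise

theorem two_sided_cayley_derangement {G : Type*} [Group G] (L R : Set G)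
    (h : TwoSCayley L R)
    (l₁ : G) (hl₁ : l₁ ∈ L) (l₂ : G) (hl₂ : l₂ ∈ L)
    (r₁ : G) (hr₁ : r₁ ∈ R) (r₂ : G) (hr₂ : r₂ ∈ R)
    (hne : ¬ ∀ g : G, l₂ * l₁⁻¹ * g * r₁ * r₂⁻¹ = g) :
    ∀ g : G, l₂ * l₁⁻¹ * g * r₁ * r₂⁻¹ ≠ g := by
  intro g hg
  obtain ⟨-, -, -, -, h3⟩ := h
  have hL : l₂ * l₁⁻¹ ∈ L * L⁻¹ := Set.mul_mem_mul hl₂ (Set.inv_mem_inv.2 hl₁)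
  have hR : r₂ * r₁⁻¹ ∈ R * R⁻¹ := Set.mul_mem_mul hr₂ (Set.inv_mem_inv.2 hr₁)
  have hc : g⁻¹ * (l₂ * l₁⁻¹) * g = r₂ * r₁⁻¹ := by
    have h2 := congrArg (fun x => g⁻¹ * x * (r₂ * r₁⁻¹)) hg
    group at h2 ⊢
    exact h2
  have hmem : g⁻¹ * (l₂ * l₁⁻¹) * g ∈ conjSet g (L * L⁻¹) ∩ (R * R⁻¹) := by
    constructor
    · exact ⟨l₂ * l₁⁻¹, hL, rfl⟩
    · rw [hc]; exact hR
  rw [h3 g] at hmem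
  have h1 : g⁻¹ * (l₂ * l₁⁻¹) * g = 1 := hmem
  have hl : l₂ * l₁⁻¹ = 1 := by
    have h2 := congrArg (fun x => g * x * g⁻¹) h1
    group at h2 ⊢
    exact h2
  have hr : r₂ * r₁⁻¹ = 1 := by rw [← hc, h1]
  apply hne
  intro x
  have hl' : l₂ = l₁ := by
    have := mul_eq_one_iff_eq_inv.1 hl; simpa using this
  have hr' : r₂ = r₁ := by
    have := mul_eq_one_iff_eq_inv.1 hr; simpa using this
  rw [hl', hr']
  group
end
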